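/- arXiv:1303.0786 — 10 statements merged into one kernel-verified Lean document; each statement's English description precedes it below -/
import Mathlib

section
/- Let Γ = (V, E) be a finite simple undirected graph, let G be a game over Γ, and let (U, W) be a cut of Γ. Suppose s and t are Nash equilibria of G with s =_{B(U) ∪ B(W)} t. Then the strategy profile e defined by e_v = s_v for v ∈ U and e_v = t_v for v ∈ W is also a Nash equilibrium of G. -/
/-- A strategic game over a dependency graph `Γ`: each player (vertex) `v` has a
finite nonempty strategy set, and the payoff of `v` depends only on the
strategies of players in `Adj⁺(v) = {v} ∪ {w : Γ.Adj v w}`. -/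
structure GameOn {V : Type} (Γ : SimpleGraph V) where
  S : V → Type
  instFin : ∀ v, Fintype (S v)
  instNonempty : ∀ v, Nonempty (S v)
  u : (v : V) → ((w : V) → S w) → ℝ
  u_local : ∀ (v : V) (s t : (w : V) → S w),
    (∀ w, (w = v ∨ Γ.Adj v w) → s w = t w) → u v s = u v t

/-- Nash equilibrium: no player can strictly increase his payoff by a
unilateral deviation. -/
def GameOn.NE {V : Type} [DecidableEq V] {Γ : SimpleGraph V} (G : GameOn Γ)
    (s : (v : V) → G.S v) : Prop :=
  ∀ (v : V) (x : G.S v), G.u v (Function.update s v x) ≤ G.u v s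

/-- `G.Det A B` is the semantics of `A ▷ B`: any two Nash equilibria that agree
on `A` also agree on `B`. -/
def GameOn.Det {V : Type} [DecidableEq V] {Γ : SimpleGraph V} (G : GameOn Γ)
    (A B : Set V) : Prop :=
  ∀ s t : (v : V) → G.S v, G.NE s → G.NE t →
    (∀ x ∈ A, s x = t x) → ∀ x ∈ B, s x = t x

/-- The border of a set of vertices `U`: vertices of `U` adjacent to some vertex outside `U`. -/
def border {V : Type} (Γ : SimpleGraph V) (U : Set V) : Set V :=
  {v | v ∈ U ∧ ∃ w, w ∉ U ∧ Γ.Adj v w}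

/-- If `(U, W)` is a cut of `Γ` and the Nash equilibria `s, t` agree on
`B(U) ∪ B(W)`, then the mixed profile (following `s` on `U` and `t` on `W`)
is also a Nash equilibrium. -/
theorem mixed_profile_NE {V : Type} [Fintype V] [DecidableEq V]
    {Γ : SimpleGraph V} (G : GameOn Γ) (U W : Set V) [DecidablePred (· ∈ U)]
    (hcut₁ : U ∪ W = Set.univ) (hcut₂ : U ∩ W = ∅)
    (s t : (v : V) → G.S v) (hs : G.NE s) (ht : G.NE t)
    (hagree : ∀ x ∈ border Γ U ∪ border Γ W, s x = t x) :
    G.NE (fun v => if v ∈ U then s v else t v) := by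
  intro v x
  set e : (w : V) → G.S w := fun w => if w ∈ U then s w else t w with he
  have hUW : ∀ w, w ∉ U → w ∈ W := by
    intro w hw
    have h := Set.ext_iff.mp hcut₁ w
    simp only [Set.mem_union, Set.mem_univ, iff_true] at h
    tauto
  have hdisj : ∀ w, w ∈ U → w ∉ W := by
    intro w h1 h2
    have h := Set.ext_iff.mp hcut₂ w
    simp only [Set.mem_inter_iff, Set.mem_empty_iff_false, iff_false, not_and] at h
    exact h h1 h2
  by_cases hv : v ∈ U
  · have hagr : ∀ w, (w = v ∨ Γ.Adj v w) → e w = s w := by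
      intro w hw
      by_cases hwU : w ∈ U
      · simp [e, hwU]
      · rcases hw with rfl | hadj
        · exact absurd hv hwU
        · have hst : s w = t w :=
            hagree w (Or.inr ⟨hUW w hwU, v, hdisj v hv, hadj.symm⟩)
          simp [e, hwU, hst]
    have h1 : G.u v (Function.update e v x) = G.u v (Function.update s v x) := by
      apply G.u_local
      intro w hw
      rcases eq_or_ne w v with rfl | hne
      · simp
      · rw [Function.update_of_ne hne, Function.update_of_ne hne]
        exact hagr w hw
    have h2 : G.u v e = G.u v s := G.u_local v e s hagr
    rw [h1, h2]; exact hs v x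
  · have hagr : ∀ w, (w = v ∨ Γ.Adj v w) → e w = t w := by
      intro w hw
      by_cases hwU : w ∈ U
      · rcases hw with rfl | hadj
        · exact absurd hwU hv
        · have hst : s w = t w :=
            hagree w (Or.inl ⟨hwU, v, hv, hadj.symm⟩)
          simp [e, hwU, hst]
      · simp [e, hwU]
    have h1 : G.u v (Function.update e v x) = G.u v (Function.update t v x) := by
      apply G.u_local
      intro w hw
      rcases eq_or_ne w v with rfl | hne
      · simp
      · rw [Function.update_of_ne hne, Function.update_of_ne hne]
        exact hagr w hw
    have h2 : G.u v e = G.u v t := G.u_local v e t hagr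
    rw [h1, h2]; exact ht v x
end

section
/- Let Γ = (V, E) be a finite simple undirected graph, let G be a game over Γ, let (U, W) be a cut of Γ, and let A ⊆ U, C ⊆ W, and B ⊆ V. If G ⊨ (A ∪ B) ▷ C, then G ⊨ (B(U) ∪ B(W) ∪ B) ▷ C. -/
/-- Contiguity (soundness): if `(U, W)` is a cut of `Γ` with `A ⊆ U`, `C ⊆ W`,
and `G ⊨ A,B ▷ C`, then `G ⊨ B(U),B(W),B ▷ C`. -/
theorem contiguity_sound {V : Type} [Fintype V] [DecidableEq V]
    {Γ : SimpleGraph V} (G : GameOn Γ) (U W : Set V)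
    (hcut₁ : U ∪ W = Set.univ) (hcut₂ : U ∩ W = ∅)
    (A B C : Set V) (hA : A ⊆ U) (hC : C ⊆ W)
    (h : G.Det (A ∪ B) C) :
    G.Det (border Γ U ∪ border Γ W ∪ B) C := by
  classical
  intro s t hs ht hagree x hxC
  have hBU : ∀ v ∈ border Γ U, s v = t v := fun v hv => hagree v (Or.inl (Or.inl hv))
  have hBW : ∀ v ∈ border Γ W, s v = t v := fun v hv => hagree v (Or.inl (Or.inr hv))
  have hB : ∀ v ∈ B, s v = t v := fun v hv => hagree v (Or.inr hv)
  have hmem : ∀ v, v ∉ U → v ∈ W := by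
    intro v hv
    have : v ∈ U ∪ W := hcut₁ ▸ Set.mem_univ v
    exact this.resolve_left hv
  have hnot : ∀ v, v ∈ U → v ∉ W := by
    intro v hvU hvW
    have : v ∈ U ∩ W := ⟨hvU, hvW⟩
    rw [hcut₂] at this; exact this
  set r : (v : V) → G.S v := fun v => if h : v ∈ U then s v else t v with hr
  have hrs : ∀ v ∈ U, ∀ w, (w = v ∨ Γ.Adj v w) → r w = s w := by
    intro v hv w hw
    by_cases hwU : w ∈ U
    · simp [hr, hwU]
    · rcases hw with rfl | hadj
      · exact absurd hv hwU
      · have hwb : w ∈ border Γ W := ⟨hmem w hwU, v, hnot v hv, hadj.symm⟩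
        simp [hr, hwU, (hBW w hwb).symm]
  have hrt : ∀ v ∈ W, ∀ w, (w = v ∨ Γ.Adj v w) → r w = t w := by
    intro v hv w hw
    by_cases hwU : w ∈ U
    · rcases hw with rfl | hadj
      · exact absurd hv (hnot w hwU)
      · have hwb : w ∈ border Γ U := ⟨hwU, v, fun hc => hnot v hc hv, hadj.symm⟩
        simp [hr, hwU, hBU w hwb]
    · simp [hr, hwU]
  have hrNE : G.NE r := by
    intro v x
    by_cases hv : v ∈ U
    · have h1 : G.u v r = G.u v s := G.u_local v r s (hrs v hv)
      have h2 : G.u v (Function.update r v x) = G.u v (Function.update s v x) := by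
        apply G.u_local
        intro w hw
        by_cases hwv : w = v
        · subst hwv; simp
        · rw [Function.update_of_ne hwv, Function.update_of_ne hwv]
          exact hrs v hv w hw
      rw [h1, h2]; exact hs v x
    · have hvW : v ∈ W := hmem v hv
      have h1 : G.u v r = G.u v t := G.u_local v r t (hrt v hvW)
      have h2 : G.u v (Function.update r v x) = G.u v (Function.update t v x) := by
        apply G.u_local
        intro w hw
        by_cases hwv : w = v
        · subst hwv; simp
        · rw [Function.update_of_ne hwv, Function.update_of_ne hwv]
          exact hrt v hvW w hw
      rw [h1, h2]; exact ht v x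
  have hsr : ∀ v ∈ A ∪ B, s v = r v := by
    intro v hv
    by_cases hvU : v ∈ U
    · simp [hr, hvU]
    · rcases hv with hvA | hvB
      · exact absurd (hA hvA) hvU
      · simp [hr, hvU, hB v hvB]
  have hsC : s x = r x := h s r hs hrNE hsr x hxC
  have hxU : x ∉ U := fun hc => hnot x hc (hC hxC)
  simpa [hr, hxU] using hsC
end

section
/- Soundness: Let Γ = (V, E) be a finite simple undirected graph and φ a formula over Γ. If ⊢_Γ φ, then G ⊨ φ for every game G over Γ. -/
/-- Formulas over a graph with vertex set `V`: built from `⊥` and atoms `A ▷ B`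
using implication. -/
inductive GFormula (V : Type) : Type where
  | falsum : GFormula V
  | dep (A B : Set V) : GFormula V
  | imp (φ ψ : GFormula V) : GFormula V

/-- Truth value of a formula under a propositional valuation of the atoms. -/
def GFormula.eval {V : Type} (val : Set V → Set V → Prop) : GFormula V → Prop
  | .falsum => False
  | .dep A B => val A B
  | .imp φ ψ => φ.eval val → ψ.eval val

/-- `⊢_Γ φ`: the smallest set of formulas containing all (substitution instances
of) propositional tautologies, closed under Modus Ponens, and containing the
Reflexivity, Augmentation, Transitivity and Contiguity axiom schemas. -/
inductive Provable {V : Type} (Γ : SimpleGraph V) : GFormula V → Prop where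
  | taut (φ : GFormula V) : (∀ val, φ.eval val) → Provable Γ φ
  | mp {φ ψ : GFormula V} : Provable Γ (φ.imp ψ) → Provable Γ φ → Provable Γ ψ
  | refl {A B : Set V} : B ⊆ A → Provable Γ (.dep A B)
  | aug (A B C : Set V) :
      Provable Γ ((GFormula.dep A B).imp (.dep (A ∪ C) (B ∪ C)))
  | trans (A B C : Set V) :
      Provable Γ ((GFormula.dep A B).imp ((GFormula.dep B C).imp (.dep A C)))
  | contiguity (A B C U W : Set V) :
      U ∪ W = Set.univ → U ∩ W = ∅ → A ⊆ U → C ⊆ W →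
      Provable Γ ((GFormula.dep (A ∪ B) C).imp
        (.dep (border Γ U ∪ border Γ W ∪ B) C))

/-- Satisfaction of a formula in a game: `G ⊨ φ`. -/
def GameOn.Sat {V : Type} [DecidableEq V] {Γ : SimpleGraph V} (G : GameOn Γ) :
    GFormula V → Prop
  | .falsum => False
  | .dep A B => G.Det A B
  | .imp φ ψ => G.Sat φ → G.Sat ψ

lemma sat_iff_eval {V : Type} [DecidableEq V] {Γ : SimpleGraph V} (G : GameOn Γ)
    (φ : GFormula V) : G.Sat φ ↔ φ.eval G.Det := by
  induction φ with
  | falsum => exact Iff.rfl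
  | dep A B => exact Iff.rfl
  | imp φ ψ ih1 ih2 =>
      simp only [GameOn.Sat, GFormula.eval]
      exact imp_congr ih1 ih2

/-- Soundness: if `⊢_Γ φ` then `G ⊨ φ` for every game `G` over `Γ`. -/
theorem soundness {V : Type} [Fintype V] [DecidableEq V] {Γ : SimpleGraph V}
    (φ : GFormula V) (h : Provable Γ φ) (G : GameOn Γ) : G.Sat φ := by
  induction h with
  | taut ψ hψ => exact (sat_iff_eval G ψ).2 (hψ G.Det)
  | mp h1 h2 ih1 ih2 => exact ih1 ih2
  | refl hBA => exact fun s t hs ht hA x hx => hA x (hBA hx)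
  | aug A B C =>
      intro hAB s t hs ht h x hx
      rcases hx with hB | hC
      · exact hAB s t hs ht (fun y hy => h y (Or.inl hy)) x hB
      · exact h x (Or.inr hC)
  | trans A B C =>
      intro hAB hBC s t hs ht hA
      exact hBC s t hs ht (hAB s t hs ht hA)
  | contiguity A B C U W hUW hdisj hAU hCW =>
      intro hABC s t hs ht hagree
      classical
      have hmemW : ∀ v, v ∉ U → v ∈ W := by
        intro v hv
        have : v ∈ U ∪ W := hUW ▸ Set.mem_univ v
        exact this.resolve_left hv
      have hnotW : ∀ v, v ∈ U → v ∉ W := by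
        intro v hvU hvW
        have : v ∈ U ∩ W := ⟨hvU, hvW⟩
        rw [hdisj] at this
        exact this
      set r : (v : V) → G.S v := fun v => if _ : v ∈ U then s v else t v with hrdef
      have hrU : ∀ v, v ∈ U → r v = s v := fun v hv => dif_pos hv
      have hrW : ∀ v, v ∉ U → r v = t v := fun v hv => dif_neg hv
      have hbU : ∀ v ∈ border Γ U, s v = t v :=
        fun v hv => hagree v (Or.inl (Or.inl hv))
      have hbW : ∀ v ∈ border Γ W, s v = t v :=
        fun v hv => hagree v (Or.inl (Or.inr hv))
      have hB : ∀ v ∈ B, s v = t v := fun v hv => hagree v (Or.inr hv)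
      have hlocS : ∀ v ∈ U, ∀ w, (w = v ∨ Γ.Adj v w) → r w = s w := by
        intro v hv w hw
        by_cases hwU : w ∈ U
        · exact hrU w hwU
        · rcases hw with rfl | hadj
          · exact absurd hv hwU
          · have hmb : w ∈ border Γ W := ⟨hmemW w hwU, ⟨v, hnotW v hv, hadj.symm⟩⟩
            rw [hrW w hwU]
            exact (hbW w hmb).symm
      have hlocT : ∀ v, v ∉ U → ∀ w, (w = v ∨ Γ.Adj v w) → r w = t w := by
        intro v hv w hw
        by_cases hwU : w ∈ U
        · rcases hw with rfl | hadj
          · exact absurd hwU hv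
          · have hmb : w ∈ border Γ U := ⟨hwU, ⟨v, hv, hadj.symm⟩⟩
            rw [hrU w hwU]
            exact hbU w hmb
        · exact hrW w hwU
      have hrNE : G.NE r := by
        intro v x
        by_cases hvU : v ∈ U
        · have e1 : G.u v r = G.u v s := G.u_local v r s (hlocS v hvU)
          have e2 : G.u v (Function.update r v x) = G.u v (Function.update s v x) := by
            apply G.u_local
            intro w hw
            rcases eq_or_ne w v with rfl | hne
            · simp
            · rw [Function.update_of_ne hne, Function.update_of_ne hne]
              exact hlocS v hvU w hw
          rw [e1, e2]
          exact hs v x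
        · have e1 : G.u v r = G.u v t := G.u_local v r t (hlocT v hvU)
          have e2 : G.u v (Function.update r v x) = G.u v (Function.update t v x) := by
            apply G.u_local
            intro w hw
            rcases eq_or_ne w v with rfl | hne
            · simp
            · rw [Function.update_of_ne hne, Function.update_of_ne hne]
              exact hlocT v hvU w hw
          rw [e1, e2]
          exact ht v x
      have hsr : ∀ x ∈ A ∪ B, s x = r x := by
        intro x hx
        rcases hx with hA | hxB
        · exact (hrU x (hAU hA)).symm
        · by_cases hxU : x ∈ U
          · exact (hrU x hxU).symm
          · rw [hrW x hxU]
            exact hB x hxB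
      intro x hxC
      have h1 : s x = r x := hABC s r hs hrNE hsr x hxC
      have h2 : r x = t x := hrW x (fun hxU => hnotW x hxU (hCW hxC))
      exact h1.trans h2
end

section
/- Let Γ₅ be the graph on vertices {a, b, c, d, e, f} with edges {a,d}, {b,e}, {c,f}, {d,e}, {e,f}, {d,f}. Then ⊢_{Γ₅} {a} ▷ {b} → ({b} ▷ {c} → ({c} ▷ {a} → {d,e,f} ▷ {a,b,c})). -/
/-- The graph `Γ₅` on vertices `a = 0`, `b = 1`, `c = 2`, `d = 3`, `e = 4`,
`f = 5` with edges `{a,d}`, `{b,e}`, `{c,f}`, `{d,e}`, `{e,f}`, `{d,f}`. -/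
def Gamma5 : SimpleGraph (Fin 6) :=
  SimpleGraph.fromRel (fun x y =>
    (x, y) ∈ ([(0, 3), (1, 4), (2, 5), (3, 4), (4, 5), (3, 5)] :
      List (Fin 6 × Fin 6)))

lemma prov_combine3 {V : Type} {Γ : SimpleGraph V} {p q r s t : GFormula V}
    (h1 : Provable Γ (p.imp q)) (h2 : Provable Γ (r.imp s))
    (h3 : Provable Γ (q.imp (s.imp t))) :
    Provable Γ (p.imp (r.imp t)) := by
  have big := Provable.taut (Γ := Γ)
    ((p.imp q).imp ((r.imp s).imp ((q.imp (s.imp t)).imp (p.imp (r.imp t)))))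
    (fun val => by simp only [GFormula.eval]; tauto)
  exact ((big.mp h1).mp h2).mp h3

lemma prov_detUnion {V : Type} (Γ : SimpleGraph V) (A B C : Set V) :
    Provable Γ ((GFormula.dep A B).imp
      ((GFormula.dep A C).imp (.dep A (B ∪ C)))) := by
  have s1 : Provable Γ ((GFormula.dep A B).imp (.dep A (A ∪ B))) := by
    have h := Provable.aug (Γ := Γ) A B A
    rwa [Set.union_self, Set.union_comm B A] at h
  have s2 : Provable Γ ((GFormula.dep A C).imp (.dep (A ∪ B) (B ∪ C))) := by
    have h := Provable.aug (Γ := Γ) A C B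
    rwa [Set.union_comm C B] at h
  exact prov_combine3 s1 s2 (Provable.trans A (A ∪ B) (B ∪ C))

lemma prov_assemble {V : Type} {Γ : SimpleGraph V}
    {h1 h2 h3 q0 q1 q2 q01 g : GFormula V}
    (P1 : Provable Γ (h1.imp q1)) (P2 : Provable Γ (h2.imp q2))
    (P3 : Provable Γ (h3.imp q0))
    (U1 : Provable Γ (q0.imp (q1.imp q01)))
    (U2 : Provable Γ (q01.imp (q2.imp g))) :
    Provable Γ (h1.imp (h2.imp (h3.imp g))) := by
  have big := Provable.taut (Γ := Γ)
    ((h1.imp q1).imp ((h2.imp q2).imp ((h3.imp q0).imp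
      ((q0.imp (q1.imp q01)).imp ((q01.imp (q2.imp g)).imp
        (h1.imp (h2.imp (h3.imp g))))))))
    (fun val => by simp only [GFormula.eval]; tauto)
  exact ((((big.mp P1).mp P2).mp P3).mp U1).mp U2

lemma border1 : border Gamma5 {0,3} = ({3} : Set (Fin 6)) := by
  ext x
  simp only [border, Gamma5, SimpleGraph.fromRel_adj, Set.mem_setOf_eq,
    Set.mem_insert_iff, Set.mem_singleton_iff]
  fin_cases x <;> decide

lemma border1' : border Gamma5 {1,2,4,5} = ({4,5} : Set (Fin 6)) := by
  ext x
  simp only [border, Gamma5, SimpleGraph.fromRel_adj, Set.mem_setOf_eq,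
    Set.mem_insert_iff, Set.mem_singleton_iff]
  fin_cases x <;> decide

lemma border2 : border Gamma5 {1,4} = ({4} : Set (Fin 6)) := by
  ext x
  simp only [border, Gamma5, SimpleGraph.fromRel_adj, Set.mem_setOf_eq,
    Set.mem_insert_iff, Set.mem_singleton_iff]
  fin_cases x <;> decide

lemma border2' : border Gamma5 {0,2,3,5} = ({3,5} : Set (Fin 6)) := by
  ext x
  simp only [border, Gamma5, SimpleGraph.fromRel_adj, Set.mem_setOf_eq,
    Set.mem_insert_iff, Set.mem_singleton_iff]
  fin_cases x <;> decide

lemma border3 : border Gamma5 {2,5} = ({5} : Set (Fin 6)) := by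
  ext x
  simp only [border, Gamma5, SimpleGraph.fromRel_adj, Set.mem_setOf_eq,
    Set.mem_insert_iff, Set.mem_singleton_iff]
  fin_cases x <;> decide

lemma border3' : border Gamma5 {0,1,3,4} = ({3,4} : Set (Fin 6)) := by
  ext x
  simp only [border, Gamma5, SimpleGraph.fromRel_adj, Set.mem_setOf_eq,
    Set.mem_insert_iff, Set.mem_singleton_iff]
  fin_cases x <;> decide

/-- Proposition 4: `⊢_{Γ₅} a ▷ b → (b ▷ c → (c ▷ a → d,e,f ▷ a,b,c))`
(with `a,…,f = 0,…,5`). -/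
theorem prop4_provable :
    Provable Gamma5 ((GFormula.dep {0} {1}).imp
      ((GFormula.dep {1} {2}).imp
        ((GFormula.dep {2} {0}).imp (.dep {3, 4, 5} {0, 1, 2})))) := by
  have P1 : Provable Gamma5 ((GFormula.dep {0} {1}).imp (.dep {3,4,5} {1})) := by
    have h := Provable.contiguity (Γ := Gamma5) {0} ∅ {1} {0,3} {1,2,4,5}
      (by ext x; fin_cases x <;> simp) (by ext x; fin_cases x <;> simp)
      (by simp) (by simp)
    simp only [Set.union_empty] at h
    rwa [border1, border1',
      show ({3} : Set (Fin 6)) ∪ {4,5} = {3,4,5} from by ext x; simp only [Set.mem_union, Set.mem_insert_iff, Set.mem_singleton_iff] <;> tauto] at h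
  have P2 : Provable Gamma5 ((GFormula.dep {1} {2}).imp (.dep {3,4,5} {2})) := by
    have h := Provable.contiguity (Γ := Gamma5) {1} ∅ {2} {1,4} {0,2,3,5}
      (by ext x; fin_cases x <;> simp) (by ext x; fin_cases x <;> simp)
      (by simp) (by simp)
    simp only [Set.union_empty] at h
    rwa [border2, border2',
      show ({4} : Set (Fin 6)) ∪ {3,5} = {3,4,5} from by ext x; simp only [Set.mem_union, Set.mem_insert_iff, Set.mem_singleton_iff] <;> tauto] at h
  have P3 : Provable Gamma5 ((GFormula.dep {2} {0}).imp (.dep {3,4,5} {0})) := by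
    have h := Provable.contiguity (Γ := Gamma5) {2} ∅ {0} {2,5} {0,1,3,4}
      (by ext x; fin_cases x <;> simp) (by ext x; fin_cases x <;> simp)
      (by simp) (by simp)
    simp only [Set.union_empty] at h
    rwa [border3, border3',
      show ({5} : Set (Fin 6)) ∪ {3,4} = {3,4,5} from by ext x; simp only [Set.mem_union, Set.mem_insert_iff, Set.mem_singleton_iff] <;> tauto] at h
  have U1 := prov_detUnion Gamma5 {3,4,5} {0} {1}
  have U2 := prov_detUnion Gamma5 {3,4,5} ({0} ∪ {1}) {2}
  rw [show (({0} : Set (Fin 6)) ∪ {1}) ∪ {2} = {0,1,2} from by ext x; simp only [Set.mem_union, Set.mem_insert_iff, Set.mem_singleton_iff] <;> tauto] at U2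
  exact prov_assemble P1 P2 P3 U1 U2
end

section
/- General principle (provability form): Let Γ = (V, E) be a finite simple undirected graph and let W ⊆ V be sparse. Then the formula ⋀_{w ∈ W} ((V \ {w}) ▷ {w}) → (V \ W) ▷ W is provable in ⊢_Γ. -/
/-- A set of vertices is sparse if any two distinct vertices in it are
non-adjacent and have no common neighbor (i.e. every path between two distinct
vertices of the set has at least three edges). -/
def Sparse {V : Type} (Γ : SimpleGraph V) (W : Set V) : Prop :=
  ∀ u ∈ W, ∀ v ∈ W, u ≠ v →
    ¬Γ.Adj u v ∧ ∀ x, ¬(Γ.Adj u x ∧ Γ.Adj v x)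

/-- Truth `⊤`, negation and conjunction, defined from `→` and `⊥` as usual. -/
def GFormula.top {V : Type} : GFormula V := (GFormula.falsum).imp .falsum

def GFormula.neg {V : Type} (φ : GFormula V) : GFormula V := φ.imp .falsum

def GFormula.conj {V : Type} (φ ψ : GFormula V) : GFormula V :=
  (φ.imp ψ.neg).neg

/-- Big conjunction of a list of formulas. -/
def GFormula.bigConj {V : Type} : List (GFormula V) → GFormula V
  | [] => .top
  | φ :: l => φ.conj (bigConj l)

namespace GPAux

lemma pimp {V : Type} {Γ : SimpleGraph V} {P φ ψ : GFormula V}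
    (h1 : Provable Γ (φ.imp ψ)) (h2 : Provable Γ (P.imp φ)) :
    Provable Γ (P.imp ψ) := by
  have t : Provable Γ ((φ.imp ψ).imp ((P.imp φ).imp (P.imp ψ))) :=
    .taut _ (fun val h1 h2 hp => h1 (h2 hp))
  exact (t.mp h1).mp h2

lemma plift {V : Type} {Γ : SimpleGraph V} {ψ : GFormula V} (P : GFormula V)
    (h : Provable Γ ψ) : Provable Γ (P.imp ψ) := by
  have t : Provable Γ (ψ.imp (P.imp ψ)) := .taut _ (fun val h _ => h)
  exact t.mp h

lemma pmp {V : Type} {Γ : SimpleGraph V} {P φ ψ : GFormula V}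
    (h1 : Provable Γ (P.imp (φ.imp ψ))) (h2 : Provable Γ (P.imp φ)) :
    Provable Γ (P.imp ψ) := by
  have t : Provable Γ ((P.imp (φ.imp ψ)).imp ((P.imp φ).imp (P.imp ψ))) :=
    .taut _ (fun val h1 h2 hp => h1 hp (h2 hp))
  exact (t.mp h1).mp h2

lemma drefl {V : Type} {Γ : SimpleGraph V} (P : GFormula V) {A B : Set V}
    (h : B ⊆ A) : Provable Γ (P.imp (.dep A B)) :=
  plift P (.refl h)

lemma dtrans {V : Type} {Γ : SimpleGraph V} {P : GFormula V} {A B C : Set V}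
    (h1 : Provable Γ (P.imp (.dep A B))) (h2 : Provable Γ (P.imp (.dep B C))) :
    Provable Γ (P.imp (.dep A C)) :=
  pmp (pimp (Provable.trans A B C) h1) h2

lemma daug {V : Type} {Γ : SimpleGraph V} {P : GFormula V} {A B : Set V}
    (C : Set V) (h : Provable Γ (P.imp (.dep A B))) :
    Provable Γ (P.imp (.dep (A ∪ C) (B ∪ C))) :=
  pimp (Provable.aug A B C) h

lemma dunion {V : Type} {Γ : SimpleGraph V} {P : GFormula V} {X B C : Set V}
    (h1 : Provable Γ (P.imp (.dep X B))) (h2 : Provable Γ (P.imp (.dep X C))) :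
    Provable Γ (P.imp (.dep X (B ∪ C))) := by
  have a1 := daug X h1
  rw [Set.union_self] at a1
  have a2 := daug B h2
  rw [Set.union_comm X B, Set.union_comm C B] at a2
  exact dtrans a1 a2

lemma eval_bigConj {V : Type} (val : Set V → Set V → Prop) :
    ∀ (l : List (GFormula V)), (GFormula.bigConj l).eval val ↔ ∀ φ ∈ l, φ.eval val := by
  intro l
  induction l with
  | nil => simp [GFormula.bigConj, GFormula.top, GFormula.eval]
  | cons a l ih =>
    simp only [GFormula.bigConj, GFormula.conj, GFormula.neg, GFormula.eval, List.mem_cons]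
    constructor
    · intro h φ hφ
      have ha : a.eval val ∧ (GFormula.bigConj l).eval val := by tauto
      rcases hφ with rfl | hφ
      · exact ha.1
      · exact (ih.mp ha.2) φ hφ
    · intro h hc
      exact hc (h a (Or.inl rfl)) (ih.mpr (fun φ hφ => h φ (Or.inr hφ)))

lemma listUnion {V : Type} {Γ : SimpleGraph V} (P : GFormula V) (X : Set V) :
    ∀ (l : List V), (∀ w ∈ l, Provable Γ (P.imp (.dep X {w}))) →
      Provable Γ (P.imp (.dep X {v | v ∈ l})) := by
  intro l
  induction l with
  | nil =>
    intro _
    have he : {v | v ∈ ([] : List V)} = (∅ : Set V) := by simp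
    rw [he]
    exact drefl P (Set.empty_subset X)
  | cons a l ih =>
    intro h
    have he : {v | v ∈ a :: l} = ({a} : Set V) ∪ {v | v ∈ l} := by
      ext x; simp [List.mem_cons]
    rw [he]
    exact dunion (h a List.mem_cons_self) (ih (fun w hw => h w (List.mem_cons_of_mem a hw)))

end GPAux

/-- General principle (provability form): if `W` is a sparse set of vertices,
then `⊢_Γ ⋀_{w ∈ W} ((V ∖ {w}) ▷ {w}) → (V ∖ W) ▷ W`. -/
theorem general_principle_provable {V : Type} [Fintype V] [DecidableEq V]
    (Γ : SimpleGraph V) (W : Finset V) (hW : Sparse Γ ↑W) :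
    Provable Γ
      ((GFormula.bigConj (W.toList.map
          (fun w => GFormula.dep (Set.univ \ {w}) {w}))).imp
        (.dep (Set.univ \ ↑W) ↑W)) := by
  open GPAux in
  set P : GFormula V := GFormula.bigConj (W.toList.map
      (fun w => GFormula.dep (Set.univ \ {w}) {w})) with hP
  -- Step 1: each premise is derivable from P
  have hprem : ∀ w ∈ W.toList, Provable Γ (P.imp (.dep (Set.univ \ {w}) {w})) := by
    intro w hw
    refine .taut _ (fun val h => ?_)
    have := (eval_bigConj val _).mp h (GFormula.dep (Set.univ \ {w}) {w})
      (List.mem_map.mpr ⟨w, hw, rfl⟩)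
    exact this
  -- Step 2: for each w ∈ W, derive P ⊢ (univ \ W) ▷ {w}
  have key : ∀ w ∈ W.toList, Provable Γ (P.imp (.dep (Set.univ \ ↑W) {w})) := by
    intro w hw
    have hwW : w ∈ W := Finset.mem_toList.mp hw
    set N : Set V := Γ.neighborSet w with hN
    set Ws : Set V := N ∪ {w} with hWs
    set U : Set V := Wsᶜ with hU
    have hcut1 : U ∪ Ws = Set.univ := Set.compl_union_self Ws
    have hcut2 : U ∩ Ws = ∅ := Set.compl_inter_self Ws
    have hcont := Provable.contiguity (Γ := Γ) U N {w} U Ws hcut1 hcut2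
      (subset_refl U) (by intro x hx; rw [Set.mem_singleton_iff] at hx; exact hx ▸ Or.inr rfl)
    have hUB : U ∪ N = Set.univ \ {w} := by
      ext x
      simp only [hU, hWs, Set.mem_union, Set.mem_compl_iff, Set.mem_singleton_iff,
        Set.mem_diff, Set.mem_univ, true_and]
      constructor
      · rintro (hx | hx)
        · exact fun hxw => hx (Or.inr hxw)
        · intro hxw
          have hadj : Γ.Adj w x := hx
          subst hxw
          exact Γ.irrefl hadj
      · intro hxw
        by_cases hxN : x ∈ N
        · exact Or.inr hxN
        · exact Or.inl (fun hc => hc.elim hxN hxw)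
    rw [hUB] at hcont
    -- D := border U ∪ border Ws ∪ N is disjoint from W
    have hD : border Γ U ∪ border Γ Ws ∪ N ⊆ Set.univ \ ↑W := by
      intro v hv
      refine ⟨trivial, fun hvW => ?_⟩
      have hvW' : v ∈ W := hvW
      rcases hv with (hv | hv) | hv
      · -- v ∈ border U
        obtain ⟨hvU, u, huU, hadj⟩ := hv
        have hvw : v ≠ w := by
          intro h; subst h
          exact hvU (Or.inr rfl)
        have hu : u ∈ Ws := not_not.mp (fun h => huU h)
        have hsp := hW w hwW v hvW' (Ne.symm hvw)
        rcases hu with hu | hu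
        · exact hsp.2 u ⟨hu, hadj⟩
        · rw [Set.mem_singleton_iff] at hu
          subst hu
          exact hsp.1 hadj.symm
      · -- v ∈ border Ws
        obtain ⟨hvWs, u, huWs, hadj⟩ := hv
        rcases hvWs with hv | hv
        · have hvw : v ≠ w := fun h => Γ.irrefl (h ▸ hv)
          exact (hW w hwW v hvW' (Ne.symm hvw)).1 hv
        · rw [Set.mem_singleton_iff] at hv
          subst hv
          exact huWs (Or.inl hadj)
      · -- v ∈ N
        have hvw : v ≠ w := fun h => Γ.irrefl (h ▸ hv)
        exact (hW w hwW v hvW' (Ne.symm hvw)).1 hv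
    have h1 : Provable Γ (P.imp (.dep (border Γ U ∪ border Γ Ws ∪ N) {w})) :=
      pimp hcont (hprem w hw)
    have h0 : Provable Γ (P.imp (.dep (Set.univ \ ↑W) (border Γ U ∪ border Γ Ws ∪ N))) :=
      drefl P hD
    exact dtrans h0 h1
  -- Step 3: combine
  have hfin := listUnion P (Set.univ \ ↑W) W.toList key
  have he : {v | v ∈ W.toList} = (↑W : Set V) := by
    ext x; simp [Finset.mem_toList]
  rw [he] at hfin
  exact hfin
end

section
/- Let Γ₁ be the path graph on vertices {a, b, c, d} with edges {a,b}, {b,c}, {c,d}, and let G be any game over Γ₁. If G ⊨ {a} ▷ {d}, then G ⊨ {b,c} ▷ {d}. -/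
/-- The path graph `Γ₁` on vertices `a = 0`, `b = 1`, `c = 2`, `d = 3` with
edges `{a,b}`, `{b,c}`, `{c,d}`. -/
def Gamma1 : SimpleGraph (Fin 4) :=
  SimpleGraph.fromRel (fun x y =>
    (x, y) ∈ ([(0, 1), (1, 2), (2, 3)] : List (Fin 4 × Fin 4)))

lemma GameOn.ne_local {V : Type} [DecidableEq V] {Γ : SimpleGraph V} (G : GameOn Γ)
    (s w : (v : V) → G.S v) (v : V)
    (hagree : ∀ z, (z = v ∨ Γ.Adj v z) → w z = s z)
    (hs : G.NE s) (x : G.S v) :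
    G.u v (Function.update w v x) ≤ G.u v w := by
  have e1 := G.u_local v w s hagree
  have e2 : G.u v (Function.update w v x) = G.u v (Function.update s v x) := by
    apply G.u_local
    intro z hz
    by_cases hzv : z = v
    · subst hzv; simp
    · rw [Function.update_of_ne hzv, Function.update_of_ne hzv]
      exact hagree z hz
  rw [e1, e2]; exact hs v x

/-- Proposition 1 (semantic form): for any game `G` over the path graph `Γ₁`,
if `G ⊨ a ▷ d` then `G ⊨ b,c ▷ d` (with `a,b,c,d = 0,1,2,3`). -/
theorem prop1_semantic (G : GameOn Gamma1)
    (h : G.Det {0} {3}) : G.Det {1, 2} {3} := by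
  intro s t hs ht hst y hy
  have h1 : s 1 = t 1 := hst 1 (by left; rfl)
  have h2 : s 2 = t 2 := hst 2 (by right; rfl)
  set w : (v : Fin 4) → G.S v := fun v => if _ : v.val ≤ 1 then s v else t v with hw
  have hwNE : G.NE w := by
    intro v x
    fin_cases v
    · exact G.ne_local s w 0 (by
        intro z hz
        fin_cases z
        · rfl
        · rfl
        · exfalso; simp only [Gamma1, SimpleGraph.fromRel_adj] at hz; revert hz; decide
        · exfalso; simp only [Gamma1, SimpleGraph.fromRel_adj] at hz; revert hz; decide) hs x
    · exact G.ne_local s w 1 (by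
        intro z hz
        fin_cases z
        · rfl
        · rfl
        · exact h2.symm
        · exfalso; simp only [Gamma1, SimpleGraph.fromRel_adj] at hz; revert hz; decide) hs x
    · exact G.ne_local t w 2 (by
        intro z hz
        fin_cases z
        · exfalso; simp only [Gamma1, SimpleGraph.fromRel_adj] at hz; revert hz; decide
        · exact h1
        · rfl
        · rfl) ht x
    · exact G.ne_local t w 3 (by
        intro z hz
        fin_cases z
        · exfalso; simp only [Gamma1, SimpleGraph.fromRel_adj] at hz; revert hz; decide
        · exfalso; simp only [Gamma1, SimpleGraph.fromRel_adj] at hz; revert hz; decide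
        · rfl
        · rfl) ht x
  have key : s 3 = w 3 := by
    refine h s w hs hwNE ?_ 3 rfl
    intro z hz
    rw [Set.mem_singleton_iff] at hz
    subst hz; rfl
  have hy3 : y = 3 := hy
  subst hy3
  exact key
end

section
/- Let Γ₁ be the path graph on vertices {a, b, c, d} with edges {a,b}, {b,c}, {c,d}, and let G be any game over Γ₁. If G ⊨ {a,c} ▷ {d} and G ⊨ {d,b} ▷ {a}, then G ⊨ {b,c} ▷ {a,d}. -/

lemma NE_of_agree_nbhd {V : Type} [DecidableEq V] {Γ : SimpleGraph V} (G : GameOn Γ)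
    (s r : (v : V) → G.S v) (hs : G.NE s) (v : V)
    (hagree : ∀ w, (w = v ∨ Γ.Adj v w) → r w = s w) :
    ∀ x : G.S v, G.u v (Function.update r v x) ≤ G.u v r := by
  intro x
  have e1 : G.u v r = G.u v s := G.u_local v r s hagree
  have e2 : G.u v (Function.update r v x) = G.u v (Function.update s v x) := by
    apply G.u_local
    intro w hw
    by_cases h : w = v
    · subst h; simp
    · rw [Function.update_of_ne h, Function.update_of_ne h]; exact hagree w hw
  rw [e1, e2]; exact hs v x

/-- Proposition 2 (semantic form): for any game `G` over the path graph `Γ₁`,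
if `G ⊨ a,c ▷ d` and `G ⊨ d,b ▷ a` then `G ⊨ b,c ▷ a,d`
(with `a,b,c,d = 0,1,2,3`). -/
theorem prop2_semantic (G : GameOn Gamma1)
    (h₁ : G.Det {0, 2} {3}) (h₂ : G.Det {3, 1} {0}) :
    G.Det {1, 2} {0, 3} := by
  intro s t hs ht hst
  have hb : s 1 = t 1 := hst 1 (by simp)
  have hc : s 2 = t 2 := hst 2 (by simp)
  classical
  set r : (v : Fin 4) → G.S v := Function.update s 3 (t 3) with hr
  have hrs : ∀ w : Fin 4, w ≠ 3 → r w = s w := by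
    intro w hw; simp [hr, Function.update_of_ne hw]
  have h123 : ∀ w : Fin 4, w ≠ 0 → w = 1 ∨ w = 2 ∨ w = 3 := by decide
  have hrt : ∀ w : Fin 4, w ≠ 0 → r w = t w := by
    intro w hw
    rcases h123 w hw with h | h | h <;> subst h
    · rw [hrs 1 (by decide)]; exact hb
    · rw [hrs 2 (by decide)]; exact hc
    · simp [hr]
  have hA0 : ∀ w : Fin 4, (w = 0 ∨ Gamma1.Adj 0 w) → w ≠ 3 := by
    simp only [Gamma1, SimpleGraph.fromRel_adj]; decide
  have hA1 : ∀ w : Fin 4, (w = 1 ∨ Gamma1.Adj 1 w) → w ≠ 3 := by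
    simp only [Gamma1, SimpleGraph.fromRel_adj]; decide
  have hA2 : ∀ w : Fin 4, (w = 2 ∨ Gamma1.Adj 2 w) → w ≠ 0 := by
    simp only [Gamma1, SimpleGraph.fromRel_adj]; decide
  have hA3 : ∀ w : Fin 4, (w = 3 ∨ Gamma1.Adj 3 w) → w ≠ 0 := by
    simp only [Gamma1, SimpleGraph.fromRel_adj]; decide
  have hrNE : G.NE r := by
    intro v x
    fin_cases v
    · exact NE_of_agree_nbhd G s r hs 0 (fun w hw => hrs w (hA0 w hw)) x
    · exact NE_of_agree_nbhd G s r hs 1 (fun w hw => hrs w (hA1 w hw)) x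
    · exact NE_of_agree_nbhd G t r ht 2 (fun w hw => hrt w (hA2 w hw)) x
    · exact NE_of_agree_nbhd G t r ht 3 (fun w hw => hrt w (hA3 w hw)) x
  have hd : t 3 = s 3 := by
    have := h₁ r s hrNE hs (by
      intro x hx
      rcases hx with h | h
      · subst h; exact hrs 0 (by decide)
      · simp only [Set.mem_singleton_iff] at h; subst h; exact hrs 2 (by decide))
      3 (by simp)
    rw [← this, hrt 3 (by decide)]
  have ha : s 0 = t 0 := by
    have := h₂ r t hrNE ht (by
      intro x hx
      rcases hx with h | h
      · subst h; exact hrt 3 (by decide)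
      · simp only [Set.mem_singleton_iff] at h; subst h; exact hrt 1 (by decide))
      0 (by simp)
    rw [← this, hrs 0 (by decide)]
  intro x hx
  rcases hx with h | h
  · subst h; exact ha
  · simp only [Set.mem_singleton_iff] at h; subst h; exact hd.symm
end

section
/- Let Γ₄ be the graph on vertices {a, b, c, d, e} with edges {a,b}, {a,c}, {b,d}, {c,d}, {d,e}, and let G be any game over Γ₄. If G ⊨ {a,c} ▷ {e}, then G ⊨ {b,c,d} ▷ {e}. -/
/-- The graph `Γ₄` on vertices `a = 0`, `b = 1`, `c = 2`, `d = 3`, `e = 4`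
with edges `{a,b}`, `{a,c}`, `{b,d}`, `{c,d}`, `{d,e}`. -/
def Gamma4 : SimpleGraph (Fin 5) :=
  SimpleGraph.fromRel (fun x y =>
    (x, y) ∈ ([(0, 1), (0, 2), (1, 3), (2, 3), (3, 4)] : List (Fin 5 × Fin 5)))

instance : DecidableRel Gamma4.Adj := fun x y =>
  decidable_of_iff _ (SimpleGraph.fromRel_adj _ x y).symm

/-- Proposition 3 (semantic form): for any game `G` over `Γ₄`, if
`G ⊨ a,c ▷ e` then `G ⊨ b,c,d ▷ e` (with `a,…,e = 0,…,4`). -/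
theorem prop3_semantic (G : GameOn Gamma4)
    (h : G.Det {0, 2} {4}) : G.Det {1, 2, 3} {4} := by
  intro s t hs ht hst x hx
  have h1 : s 1 = t 1 := hst 1 (by simp)
  have h2 : s 2 = t 2 := hst 2 (by simp)
  have h3 : s 3 = t 3 := hst 3 (by simp)
  set r : (v : Fin 5) → G.S v := Function.update s 0 (t 0) with hr
  have hr0 : r 0 = t 0 := Function.update_self _ _ _
  have hr1 : r 1 = t 1 := by rw [hr, Function.update_of_ne (by decide)]; exact h1
  have hr2 : r 2 = t 2 := by rw [hr, Function.update_of_ne (by decide)]; exact h2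
  have hr3 : r 3 = t 3 := by rw [hr, Function.update_of_ne (by decide)]; exact h3
  have hr3' : r 3 = s 3 := Function.update_of_ne (by decide) _ _
  have hr4 : r 4 = s 4 := Function.update_of_ne (by decide) _ _
  have hrNE : G.NE r := by
    intro v y
    fin_cases v
    · -- player 0, compare with t
      show G.u 0 (Function.update r 0 y) ≤ G.u 0 r
      have e1 : G.u 0 (Function.update r 0 y) = G.u 0 (Function.update t 0 y) := by
        apply G.u_local
        intro w hw
        fin_cases w
        · show Function.update r 0 y 0 = Function.update t 0 y 0
          simp [Function.update_self]
        · show Function.update r 0 y 1 = Function.update t 0 y 1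
          rw [Function.update_of_ne (by decide), Function.update_of_ne (by decide)]; exact hr1
        · show Function.update r 0 y 2 = Function.update t 0 y 2
          rw [Function.update_of_ne (by decide), Function.update_of_ne (by decide)]; exact hr2
        · exact absurd hw (by decide)
        · exact absurd hw (by decide)
      have e2 : G.u 0 r = G.u 0 t := by
        apply G.u_local
        intro w hw
        fin_cases w
        · exact hr0
        · exact hr1
        · exact hr2
        · exact absurd hw (by decide)
        · exact absurd hw (by decide)
      rw [e1, e2]; exact ht 0 y
    · -- player 1, compare with t
      show G.u 1 (Function.update r 1 y) ≤ G.u 1 r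
      have e1 : G.u 1 (Function.update r 1 y) = G.u 1 (Function.update t 1 y) := by
        apply G.u_local
        intro w hw
        fin_cases w
        · show Function.update r 1 y 0 = Function.update t 1 y 0
          rw [Function.update_of_ne (by decide), Function.update_of_ne (by decide)]; exact hr0
        · show Function.update r 1 y 1 = Function.update t 1 y 1
          simp [Function.update_self]
        · exact absurd hw (by decide)
        · show Function.update r 1 y 3 = Function.update t 1 y 3
          rw [Function.update_of_ne (by decide), Function.update_of_ne (by decide)]; exact hr3
        · exact absurd hw (by decide)
      have e2 : G.u 1 r = G.u 1 t := by
        apply G.u_local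
        intro w hw
        fin_cases w
        · exact hr0
        · exact hr1
        · exact absurd hw (by decide)
        · exact hr3
        · exact absurd hw (by decide)
      rw [e1, e2]; exact ht 1 y
    · -- player 2, compare with t
      show G.u 2 (Function.update r 2 y) ≤ G.u 2 r
      have e1 : G.u 2 (Function.update r 2 y) = G.u 2 (Function.update t 2 y) := by
        apply G.u_local
        intro w hw
        fin_cases w
        · show Function.update r 2 y 0 = Function.update t 2 y 0
          rw [Function.update_of_ne (by decide), Function.update_of_ne (by decide)]; exact hr0
        · exact absurd hw (by decide)
        · show Function.update r 2 y 2 = Function.update t 2 y 2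
          simp [Function.update_self]
        · show Function.update r 2 y 3 = Function.update t 2 y 3
          rw [Function.update_of_ne (by decide), Function.update_of_ne (by decide)]; exact hr3
        · exact absurd hw (by decide)
      have e2 : G.u 2 r = G.u 2 t := by
        apply G.u_local
        intro w hw
        fin_cases w
        · exact hr0
        · exact absurd hw (by decide)
        · exact hr2
        · exact hr3
        · exact absurd hw (by decide)
      rw [e1, e2]; exact ht 2 y
    · -- player 3, compare with s
      show G.u 3 (Function.update r 3 y) ≤ G.u 3 r
      have e1 : G.u 3 (Function.update r 3 y) = G.u 3 (Function.update s 3 y) := by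
        apply G.u_local
        intro w hw
        fin_cases w
        · exact absurd hw (by decide)
        · show Function.update r 3 y 1 = Function.update s 3 y 1
          rw [Function.update_of_ne (by decide), Function.update_of_ne (by decide)]
          exact Function.update_of_ne (by decide) _ _
        · show Function.update r 3 y 2 = Function.update s 3 y 2
          rw [Function.update_of_ne (by decide), Function.update_of_ne (by decide)]
          exact Function.update_of_ne (by decide) _ _
        · show Function.update r 3 y 3 = Function.update s 3 y 3
          simp [Function.update_self]
        · show Function.update r 3 y 4 = Function.update s 3 y 4
          rw [Function.update_of_ne (by decide), Function.update_of_ne (by decide)]; exact hr4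
      have e2 : G.u 3 r = G.u 3 s := by
        apply G.u_local
        intro w hw
        fin_cases w
        · exact absurd hw (by decide)
        · exact Function.update_of_ne (by decide) _ _
        · exact Function.update_of_ne (by decide) _ _
        · exact hr3'
        · exact hr4
      rw [e1, e2]; exact hs 3 y
    · -- player 4, compare with s
      show G.u 4 (Function.update r 4 y) ≤ G.u 4 r
      have e1 : G.u 4 (Function.update r 4 y) = G.u 4 (Function.update s 4 y) := by
        apply G.u_local
        intro w hw
        fin_cases w
        · exact absurd hw (by decide)
        · exact absurd hw (by decide)
        · exact absurd hw (by decide)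
        · show Function.update r 4 y 3 = Function.update s 4 y 3
          rw [Function.update_of_ne (by decide), Function.update_of_ne (by decide)]; exact hr3'
        · show Function.update r 4 y 4 = Function.update s 4 y 4
          simp [Function.update_self]
      have e2 : G.u 4 r = G.u 4 s := by
        apply G.u_local
        intro w hw
        fin_cases w
        · exact absurd hw (by decide)
        · exact absurd hw (by decide)
        · exact absurd hw (by decide)
        · exact hr3'
        · exact hr4
      rw [e1, e2]; exact hs 4 y
  have key : r 4 = t 4 := by
    apply h r t hrNE ht _ 4 (by simp)
    intro z hz
    rcases hz with rfl | hz
    · exact hr0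
    · simp only [Set.mem_singleton_iff] at hz; subst hz; exact hr2
  have hx4 : x = 4 := by simpa using hx
  subst hx4
  rw [← hr4]; exact key
end

section
/- General principle (semantic form): Let Γ = (V, E) be a finite simple undirected graph, let W ⊆ V be sparse, and let G be any game over Γ. If G ⊨ (V \ {w}) ▷ {w} for every w ∈ W, then G ⊨ (V \ W) ▷ W. -/
/-- General principle (semantic form): if `W` is a sparse set of vertices of a
finite graph `Γ` and, in a game `G` over `Γ`, every `w ∈ W` is functionally
determined by `V ∖ {w}`, then `V ∖ W` functionally determines `W`. -/
theorem general_principle_semantic {V : Type} [Fintype V] [DecidableEq V]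
    {Γ : SimpleGraph V} (W : Set V) (hW : Sparse Γ W) (G : GameOn Γ)
    (h : ∀ w ∈ W, G.Det (Set.univ \ {w}) {w}) :
    G.Det (Set.univ \ W) W := by
  intro s t hs ht hag w hw
  classical
  -- hybrid profile: s at w, t elsewhere
  set r : (v : V) → G.S v := Function.update t w (s w) with hr
  have hrw : r w = s w := Function.update_self _ _ _
  have hrz : ∀ z, z ≠ w → r z = t z := fun z hz => Function.update_of_ne hz _ _
  have hst : ∀ z, z ∉ W → s z = t z := fun z hz => hag z ⟨trivial, hz⟩
  -- r is a Nash equilibrium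
  have hrNE : G.NE r := by
    intro v x
    by_cases hv : v = w ∨ Γ.Adj w v
    · -- r agrees with s on Adj⁺(v)
      have key : ∀ z, (z = v ∨ Γ.Adj v z) → r z = s z := by
        intro z hz
        by_cases hzw : z = w
        · subst hzw; exact hrw
        · rw [hrz z hzw]
          refine (hst z ?_).symm
          intro hzW
          have hne : w ≠ z := fun e => hzw e.symm
          have hsp := hW w hw z hzW hne
          rcases hv with rfl | hadj
          · rcases hz with rfl | hadj'
            · exact hzw rfl
            · exact hsp.1 hadj'
          · rcases hz with rfl | hadj'
            · exact hsp.1 hadj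
            · exact hsp.2 v ⟨hadj, hadj'.symm⟩
      have h1 : G.u v r = G.u v s := G.u_local v r s key
      have h2 : G.u v (Function.update r v x) = G.u v (Function.update s v x) := by
        refine G.u_local v _ _ ?_
        intro z hz
        by_cases hzv : z = v
        · subst hzv; simp
        · rw [Function.update_of_ne hzv, Function.update_of_ne hzv]
          exact key z hz
      rw [h1, h2]; exact hs v x
    · push_neg at hv
      have key : ∀ z, (z = v ∨ Γ.Adj v z) → r z = t z := by
        intro z hz
        refine hrz z ?_
        rintro rfl
        rcases hz with rfl | hadj
        · exact hv.1 rfl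
        · exact hv.2 hadj.symm
      have h1 : G.u v r = G.u v t := G.u_local v r t key
      have h2 : G.u v (Function.update r v x) = G.u v (Function.update t v x) := by
        refine G.u_local v _ _ ?_
        intro z hz
        by_cases hzv : z = v
        · subst hzv; simp
        · rw [Function.update_of_ne hzv, Function.update_of_ne hzv]
          exact key z hz
      rw [h1, h2]; exact ht v x
  -- r and t agree off w, hence agree at w by hypothesis h
  have := h w hw r t hrNE ht (fun z hz => hrz z (by simpa using hz.2)) w rfl
  rw [hrw] at this
  exact this
end

section
/- Parity game: Let G be the three-player game with players a, b, c, each having strategy set {0, 1}, where every player's payoff is 1 if s_a + s_b + s_c is even and 0 otherwise. Then the set of Nash equilibria of G is exactly the set of profiles with even sum, namely {(0,0,0), (0,1,1), (1,0,1), (1,1,0)}; consequently G ⊨ {a,b} ▷ {c}, and it is not the case that G ⊨ {a} ▷ {c}. -/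
/-- Payoff in the parity game: players `a = 0`, `b = 1`, `c = 2` each choose a
strategy in `{0, 1}`; every player's payoff is `1` if the sum of the three
chosen numbers is even, and `0` otherwise. -/
def parityPayoff (v : Fin 3) (s : Fin 3 → Fin 2) : ℝ :=
  if Even ((s 0 : ℕ) + (s 1 : ℕ) + (s 2 : ℕ)) then 1 else 0

/-- Nash equilibrium of the parity game: no player can strictly increase his
payoff by a unilateral deviation. -/
def parityNE (s : Fin 3 → Fin 2) : Prop :=
  ∀ (v : Fin 3) (x : Fin 2),
    parityPayoff v (Function.update s v x) ≤ parityPayoff v s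

/-- `A ▷ B` in the parity game: any two Nash equilibria that agree on `A`
also agree on `B`. -/
def parityDet (A B : Set (Fin 3)) : Prop :=
  ∀ s t : Fin 3 → Fin 2, parityNE s → parityNE t →
    (∀ x ∈ A, s x = t x) → ∀ x ∈ B, s x = t x

lemma parityNE_iff (s : Fin 3 → Fin 2) :
    parityNE s ↔ Even ((s 0 : ℕ) + (s 1 : ℕ) + (s 2 : ℕ)) := by
  constructor
  · intro h
    by_contra hodd
    have h0 := h 0 (1 - s 0)
    have e1 : Function.update s 0 (1 - s 0) 1 = s 1 := by
      simp [Function.update]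
    have e2 : Function.update s 0 (1 - s 0) 2 = s 2 := by
      simp [Function.update]
    have e0 : Function.update s 0 (1 - s 0) 0 = 1 - s 0 := by simp
    have heven : Even (((1 - s 0 : Fin 2) : ℕ) + (s 1 : ℕ) + (s 2 : ℕ)) := by
      obtain ⟨a, ha⟩ : ∃ a, s 0 = a := ⟨_, rfl⟩
      rw [ha] at hodd ⊢
      fin_cases a <;> simp_all [Nat.even_add, Nat.even_iff, Nat.odd_iff] <;> omega
    rw [parityPayoff, parityPayoff, e0, e1, e2, if_pos heven, if_neg hodd] at h0
    norm_num at h0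
  · intro he v x
    rw [parityPayoff, parityPayoff, if_pos he]
    split <;> norm_num

/-- The Nash equilibria of the parity game are exactly the four even-sum
profiles `(0,0,0)`, `(0,1,1)`, `(1,0,1)`, `(1,1,0)`; consequently
`G ⊨ a,b ▷ c` but `G ⊭ a ▷ c`. -/
theorem parity_game :
    ({s | parityNE s} =
      ({![0, 0, 0], ![0, 1, 1], ![1, 0, 1], ![1, 1, 0]} : Set (Fin 3 → Fin 2)))
    ∧ parityDet {0, 1} {2} ∧ ¬parityDet {0} {2} := by
  refine ⟨?_, ?_, ?_⟩
  · ext s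
    simp only [Set.mem_setOf_eq, Set.mem_insert_iff, Set.mem_singleton_iff, parityNE_iff]
    revert s
    decide
  · intro s t hs ht hag x hx
    rw [parityNE_iff] at hs ht
    have h0 := hag 0 (by simp)
    have h1 := hag 1 (by simp)
    have hx2 : x = 2 := hx
    subst hx2
    revert hs ht h0 h1
    revert s t
    decide
  · intro h
    have := h ![0,0,0] ![0,1,1] (by rw [parityNE_iff]; decide) (by rw [parityNE_iff]; decide)
      (by intro x hx; simp at hx; subst hx; rfl) 2 rfl
    simp at this
end
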